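/- arXiv:2111.02824 — 2 statements merged into one kernel-verified Lean document; each statement's English description precedes it below -/
import Mathlib

section
/- An LFSA S is not *-strongly detectable if and only if in the self-composition CC(S) there exists a run q0' →s1' q1' →s2' q1' →s3' q2' with q0' an initial state of CC(S), ℓ(s2') a nonempty output sequence, and the left and right components of q2' distinct. -/
/-- A labeled finite-state automaton (LFSA): transition relation `δ`,
initial states `Q0`, labeling `lab` (where `none` stands for ε, i.e. unobservable). -/
structure LFSA (Q : Type*) (E : Type*) (A : Type*) where
  δ : Q → E → Q → Prop
  Q0 : Set Q
  lab : E → Option A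

namespace LFSA

variable {Q Q1 Q2 E A : Type*}

/-- A run `q →s q'` over a finite event sequence. -/
inductive Run (S : LFSA Q E A) : Q → List E → Q → Prop
  | nil (q : Q) : Run S q [] q
  | cons {q q' q'' : Q} {e : E} {s : List E} :
      S.δ q e q' → Run S q' s q'' → Run S q (e :: s) q''

/-- Output (label sequence) of an event sequence. -/
def out (S : LFSA Q E A) (s : List E) : List A := s.filterMap S.lab

/-- Generated finite language. -/
def L (S : LFSA Q E A) : Set (List E) := {s | ∃ q0 ∈ S.Q0, ∃ q, S.Run q0 s q}

/-- Current-state estimate after observing `σ`. -/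
def M (S : LFSA Q E A) (σ : List A) : Set Q :=
  {q | ∃ q0 ∈ S.Q0, ∃ s : List E, S.out s = σ ∧ S.Run q0 s q}

/-- Reachability via a nonempty event sequence. -/
def ReachPlus (S : LFSA Q E A) (q q' : Q) : Prop := ∃ s : List E, s ≠ [] ∧ S.Run q s q'

/-- There is a transition cycle reachable from `q` (a cycle at `q` itself counts). -/
def CycleReachableFrom (S : LFSA Q E A) (q : Q) : Prop :=
  ∃ p : Q, (p = q ∨ S.ReachPlus q p) ∧ ∃ s : List E, s ≠ [] ∧ S.Run p s p

/-- `*`-strong detectability. -/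
def StarSD (S : LFSA Q E A) : Prop :=
  ∃ k : ℕ, 0 < k ∧ ∀ s ∈ S.L, ∀ σ : List A, σ <+: S.out s → k < σ.length →
    ∃ q : Q, S.M σ = {q}

/-- ω-strong detectability. -/
def OmegaSD (S : LFSA Q E A) : Prop :=
  ∃ k : ℕ, 0 < k ∧ ∀ (s : ℕ → E) (ρ : ℕ → Q), ρ 0 ∈ S.Q0 →
    (∀ n : ℕ, S.δ (ρ n) (s n) (ρ (n + 1))) →
    ∀ (n : ℕ) (σ : List A), σ <+: S.out (List.ofFn (fun i : Fin n => s i)) →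
      k < σ.length → ∃ q : Q, S.M σ = {q}

/-- Concurrent composition: observable transitions with equal labels synchronize,
unobservable transitions interleave. Events are pairs over `Option E` (`none` = ε). -/
def CC (S1 : LFSA Q1 E A) (S2 : LFSA Q2 E A) :
    LFSA (Q1 × Q2) (Option E × Option E) A where
  δ p ev p' :=
    match ev with
    | (some e, some e') =>
        (∃ a : A, S1.lab e = some a ∧ S2.lab e' = some a) ∧
          S1.δ p.1 e p'.1 ∧ S2.δ p.2 e' p'.2
    | (some e, none) => S1.lab e = none ∧ S1.δ p.1 e p'.1 ∧ p.2 = p'.2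
    | (none, some e') => S2.lab e' = none ∧ p.1 = p'.1 ∧ S2.δ p.2 e' p'.2
    | (none, none) => False
  Q0 := {p | p.1 ∈ S1.Q0 ∧ p.2 ∈ S2.Q0}
  lab ev := ev.1.bind S1.lab

/-- Left projection of an event sequence of a concurrent composition. -/
def lproj (s : List (Option E × Option E)) : List E := s.filterMap Prod.fst

/-- Right projection of an event sequence of a concurrent composition. -/
def rproj (s : List (Option E × Option E)) : List E := s.filterMap Prod.snd

/-- Unobservable reach of a set of states. -/
def UR (S : LFSA Q E A) (X : Set Q) : Set Q :=
  {q | ∃ q0 ∈ X, ∃ s : List E, S.out s = [] ∧ S.Run q0 s q}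

/-- One step of the observer (powerset construction). -/
def obsStep (S : LFSA Q E A) (x : Set Q) (a : A) : Set Q :=
  {q' | ∃ q ∈ x, ∃ (e : E) (p : Q), S.lab e = some a ∧ S.δ q e p ∧ q' ∈ S.UR {p}}

/-- Observer run (deterministic). -/
def obsRun (S : LFSA Q E A) (x : Set Q) (σ : List A) : Set Q := σ.foldl S.obsStep x

/-- The concurrent composition `CC(S_ε, Obs^ε)` of `S` (with events relabeled by their
labels) and a deterministic observer with step function `ostep` and initial state `x0`:
observable transitions move both components, unobservable ones move only the left one. -/
def CCObs (S : LFSA Q E A) (ostep : Set Q → A → Set Q) (x0 : Set Q) :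
    LFSA (Q × Set Q) E A where
  δ p e p' := S.δ p.1 e p'.1 ∧
    (∀ a : A, S.lab e = some a → p'.2 = ostep p.2 a) ∧
    (S.lab e = none → p'.2 = p.2)
  Q0 := {p | p.1 ∈ S.Q0 ∧ p.2 = x0}
  lab := S.lab

/-- A state is reachable if it is an initial state or reachable from one. -/
def Reachable (S : LFSA Q E A) (q : Q) : Prop := ∃ q0 ∈ S.Q0, ∃ s : List E, S.Run q0 s q

/-- Restriction of an automaton to a set of allowed states. -/
def restrict (S : LFSA Q E A) (P : Set Q) : LFSA Q E A where
  δ q e q' := S.δ q e q' ∧ q ∈ P ∧ q' ∈ P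
  Q0 := S.Q0 ∩ P
  lab := S.lab

/-- A run all of whose states (including endpoints) lie in `P`. -/
inductive RunIn (S : LFSA Q E A) (P : Set Q) : Q → List E → Q → Prop
  | nil (q : Q) : q ∈ P → RunIn S P q [] q
  | cons {q q' q'' : Q} {e : E} {s : List E} :
      q ∈ P → S.δ q e q' → RunIn S P q' s q'' → RunIn S P q (e :: s) q''

/-- Normal subautomaton: all faulty transitions removed. -/
def Sn (S : LFSA Q E A) (Ef : Set E) : LFSA Q E A where
  δ q e q' := S.δ q e q' ∧ e ∉ Ef
  Q0 := S.Q0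
  lab := S.lab

/-- Faulty subautomaton: faulty transitions together with all their
predecessor and successor transitions. -/
def Sf (S : LFSA Q E A) (Ef : Set E) : LFSA Q E A where
  δ q e q' := S.δ q e q' ∧ ∃ c f d, f ∈ Ef ∧ S.δ c f d ∧
      ((q = c ∧ e = f ∧ q' = d) ∨ (c = q' ∨ S.ReachPlus q' c) ∨ (q = d ∨ S.ReachPlus d q))
  Q0 := S.Q0
  lab := S.lab

/-- `s` ends with a faulty event. -/
def EndsFaulty (Ef : Set E) (s : List E) : Prop := ∃ (t : List E) (e : E), e ∈ Ef ∧ s = t ++ [e]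

/-- `E_f`-diagnosability. -/
def Diag (S : LFSA Q E A) (Ef : Set E) : Prop :=
  ∃ k : ℕ, ∀ s ∈ S.L, EndsFaulty Ef s → ∀ s' : List E, s ++ s' ∈ S.L → k < s'.length →
    ∀ s'' ∈ S.L, S.out s'' = S.out (s ++ s') → ∃ e ∈ Ef, e ∈ s''

/-- `E_f`-predictability. -/
def Pred (S : LFSA Q E A) (Ef : Set E) : Prop :=
  ∃ k : ℕ, ∀ s ∈ S.L, EndsFaulty Ef s →
    ∃ s' : List E, s' <+: s ∧ (∀ e ∈ s', e ∉ Ef) ∧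
      ∀ u v : List E, u ++ v ∈ S.L → S.out s' = S.out u → (∀ e ∈ u, e ∉ Ef) →
        k < v.length → ∃ e ∈ Ef, e ∈ v

/-- Current-state opacity. -/
def CSO (S : LFSA Q E A) (QS : Set Q) : Prop :=
  ∀ q0 ∈ S.Q0, ∀ (s : List E) (q : Q), S.Run q0 s q → q ∈ QS →
    ∃ q0' ∈ S.Q0, ∃ (s' : List E) (q' : Q), S.Run q0' s' q' ∧ q' ∉ QS ∧ S.out s = S.out s'

/-- Initial-state opacity. -/
def ISO (S : LFSA Q E A) (QS : Set Q) : Prop :=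
  ∀ q0 ∈ S.Q0 ∩ QS, ∀ (s : List E) (q : Q), S.Run q0 s q →
    ∃ q0' ∈ S.Q0 \ QS, ∃ (s' : List E) (q' : Q), S.Run q0' s' q' ∧ S.out s = S.out s'

/-- Infinite-step opacity. -/
def InfSO (S : LFSA Q E A) (QS : Set Q) : Prop :=
  ∀ q0 ∈ S.Q0, ∀ (s1 : List E) (q1 : Q) (s2 : List E) (q2 : Q),
    S.Run q0 s1 q1 → S.Run q1 s2 q2 → q1 ∈ QS →
    ∃ q0' ∈ S.Q0, ∃ (s1' : List E) (q1' : Q) (s2' : List E) (q2' : Q),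
      S.Run q0' s1' q1' ∧ S.Run q1' s2' q2' ∧ q1' ∉ QS ∧
        S.out s1 = S.out s1' ∧ S.out s2 = S.out s2'

/-- `K`-step opacity. -/
def KSO (S : LFSA Q E A) (QS : Set Q) (K : ℕ) : Prop :=
  ∀ q0 ∈ S.Q0, ∀ (s1 : List E) (q1 : Q) (s2 : List E) (q2 : Q),
    S.Run q0 s1 q1 → S.Run q1 s2 q2 → q1 ∈ QS → (S.out s2).length ≤ K →
    ∃ q0' ∈ S.Q0, ∃ (s1' : List E) (q1' : Q) (s2' : List E) (q2' : Q),
      S.Run q0' s1' q1' ∧ S.Run q1' s2' q2' ∧ q1' ∉ QS ∧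
        S.out s1 = S.out s1' ∧ S.out s2 = S.out s2'

/-- Strong current-state opacity: the matching run is entirely non-secret. -/
def SCSO (S : LFSA Q E A) (QS : Set Q) : Prop :=
  ∀ q0 ∈ S.Q0, ∀ (s : List E) (q : Q), S.Run q0 s q → q ∈ QS →
    ∃ q0' ∈ S.Q0, ∃ (s' : List E) (q' : Q), S.RunIn QSᶜ q0' s' q' ∧ S.out s = S.out s'

/-- Strong initial-state opacity. -/
def SISO (S : LFSA Q E A) (QS : Set Q) : Prop :=
  ∀ q0 ∈ S.Q0 ∩ QS, ∀ (s : List E) (q : Q), S.Run q0 s q →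
    ∃ q0' ∈ S.Q0 \ QS, ∃ (s' : List E) (q' : Q), S.RunIn QSᶜ q0' s' q' ∧ S.out s = S.out s'

/-- Strong infinite-step opacity. -/
def SInfSO (S : LFSA Q E A) (QS : Set Q) : Prop :=
  ∀ q0 ∈ S.Q0, ∀ (s1 : List E) (q1 : Q) (s2 : List E) (q2 : Q),
    S.Run q0 s1 q1 → S.Run q1 s2 q2 → q1 ∈ QS →
    ∃ q0' ∈ S.Q0, ∃ (s1' : List E) (q1' : Q) (s2' : List E) (q2' : Q),
      S.RunIn QSᶜ q0' s1' q1' ∧ S.RunIn QSᶜ q1' s2' q2' ∧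
        S.out s1 = S.out s1' ∧ S.out s2 = S.out s2'

/-- Strong `K`-step opacity. -/
def SKSO (S : LFSA Q E A) (QS : Set Q) (K : ℕ) : Prop :=
  ∀ q0 ∈ S.Q0, ∀ (s1 : List E) (q1 : Q) (s2 : List E) (q2 : Q),
    S.Run q0 s1 q1 → S.Run q1 s2 q2 → q1 ∈ QS → (S.out s2).length ≤ K →
    ∃ q0' ∈ S.Q0, ∃ (s1' : List E) (q1' : Q) (s2' : List E) (q2' : Q),
      S.RunIn QSᶜ q0' s1' q1' ∧ S.RunIn QSᶜ q1' s2' q2' ∧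
        S.out s1 = S.out s1' ∧ S.out s2 = S.out s2'

/-- Observer step of the secret-deleted subautomaton `S_dss`. -/
def dssObsStep (S : LFSA Q E A) (QS : Set Q) : Set Q → A → Set Q :=
  (S.restrict QSᶜ).obsStep

/-- Initial observer state of the secret-deleted subautomaton. -/
def dssInit (S : LFSA Q E A) (QS : Set Q) : Set Q :=
  (S.restrict QSᶜ).UR (S.restrict QSᶜ).Q0

end LFSA

/-!
Two states `x ≠ y` can both be consistent with an arbitrarily long observation exactly when
the self-composition has a reachable pair `(x, y)` with arbitrarily long output, because the
state pairs reachable in `CC(S₁, S₂)` with output `σ` are exactly `M(S₁, σ) × M(S₂, σ)`. Since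
the composition has finitely many states, a run with more outputs than states contains a cycle
with nonempty output (pumping), and conversely iterating such a cycle produces arbitrarily
long outputs.
-/

namespace LFSA

variable {Q Q1 Q2 E A : Type*}

section Runs

variable {S : LFSA Q E A}

@[simp] lemma out_nil (S : LFSA Q E A) : S.out [] = [] := rfl

@[simp] lemma out_append (S : LFSA Q E A) (s t : List E) :
    S.out (s ++ t) = S.out s ++ S.out t :=
  List.filterMap_append ..

@[simp] lemma out_cons (S : LFSA Q E A) (e : E) (s : List E) :
    S.out (e :: s) = (S.lab e).toList ++ S.out s := by
  cases h : S.lab e <;> simp [out, h]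

lemma Run.single {q q' : Q} {e : E} (h : S.δ q e q') : S.Run q [e] q' := .cons h (.nil q')

lemma Run.append {q m q' : Q} {s t : List E} (h : S.Run q s m) (h' : S.Run m t q') :
    S.Run q (s ++ t) q' := by
  induction h with
  | nil => exact h'
  | cons hd _ ih => exact .cons hd (ih h')

lemma run_append_iff {q q' : Q} {s t : List E} :
    S.Run q (s ++ t) q' ↔ ∃ m, S.Run q s m ∧ S.Run m t q' := by
  refine ⟨fun h => ?_, fun ⟨_, hs, ht⟩ => hs.append ht⟩
  induction s generalizing q with
  | nil => exact ⟨q, .nil q, h⟩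
  | cons e s ih =>
    cases h with
    | cons hd hr =>
      obtain ⟨m, hs, ht⟩ := ih hr
      exact ⟨m, .cons hd hs, ht⟩

lemma Run.exists_run_of_prefix_out {q q' : Q} {s : List E} {σ : List A} (h : S.Run q s q')
    (hσ : σ <+: S.out s) : ∃ s₀ m, S.Run q s₀ m ∧ S.out s₀ = σ := by
  obtain ⟨τ, hτ⟩ := hσ
  obtain ⟨s₀, s₁, rfl, hs₀, -⟩ := List.filterMap_eq_append_iff.mp hτ.symm
  obtain ⟨m, hm, -⟩ := run_append_iff.mp h
  exact ⟨s₀, m, hm, hs₀⟩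

lemma Run.exists_long_cycle {q : Q} {s : List E} (h : S.Run q s q) (hs : S.out s ≠ [])
    (n : ℕ) : ∃ t, S.Run q t q ∧ n ≤ (S.out t).length := by
  induction n with
  | zero => exact ⟨[], .nil q, Nat.zero_le _⟩
  | succ n ih =>
    obtain ⟨t, ht, hn⟩ := ih
    have := List.length_pos_iff.mpr hs
    exact ⟨t ++ s, ht.append h, by simp only [out_append, List.length_append]; omega⟩

/- `X` collects the states met just before the observable events read so far, each of which
reaches the current state `q` with nonempty output; a repetition in `X` closes the cycle. -/
lemma Run.exists_cycle_of_card_lt_aux [Fintype Q] [DecidableEq Q] {q₀ q q' : Q} {s : List E}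
    (h : S.Run q s q') (X : Finset Q) (hq : ∃ s₀, S.Run q₀ s₀ q)
    (hX : ∀ x ∈ X, ∃ s₁ t, S.Run q₀ s₁ x ∧ S.Run x t q ∧ S.out t ≠ [])
    (hcard : Fintype.card Q < X.card + (S.out s).length) :
    ∃ q₁ s₁ s₂ s₃, S.Run q₀ s₁ q₁ ∧ S.Run q₁ s₂ q₁ ∧ S.Run q₁ s₃ q' ∧ S.out s₂ ≠ [] := by
  induction h generalizing X with
  | nil =>
    have := X.card_le_univ
    simp only [out_nil, List.length_nil, Nat.add_zero] at hcard
    omega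
  | @cons q q₁ _ e s hd hr ih =>
    obtain ⟨s₀, hs₀⟩ := hq
    have hq₁ : ∃ s₀, S.Run q₀ s₀ q₁ := ⟨s₀ ++ [e], hs₀.append (.single hd)⟩
    have hX₁ : ∀ x ∈ X, ∃ s₁ t, S.Run q₀ s₁ x ∧ S.Run x t q₁ ∧ S.out t ≠ [] := by
      intro x hx
      obtain ⟨s₁, t, hs₁, ht, hne⟩ := hX x hx
      exact ⟨s₁, t ++ [e], hs₁, ht.append (.single hd), by simp [hne]⟩
    cases he : S.lab e with
    | none => exact ih X hq₁ hX₁ (by simpa [he] using hcard)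
    | some a =>
      by_cases hqX : q ∈ X
      · obtain ⟨s₁, t, hs₁, ht, hne⟩ := hX q hqX
        exact ⟨q, s₁, t, e :: s, hs₁, ht, .cons hd hr, hne⟩
      · refine ih (insert q X) hq₁ ?_ ?_
        · intro x hx
          rcases Finset.mem_insert.mp hx with rfl | hx
          · exact ⟨s₀, [e], hs₀, .single hd, by simp [he]⟩
          · exact hX₁ x hx
        · simp only [out_cons, he, Option.toList_some, List.singleton_append,
            List.length_cons] at hcard
          rw [Finset.card_insert_of_notMem hqX]
          omega

theorem Run.exists_cycle_of_card_lt [Fintype Q] {q q' : Q} {s : List E} (h : S.Run q s q')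
    (hs : Fintype.card Q < (S.out s).length) :
    ∃ q₁ s₁ s₂ s₃, S.Run q s₁ q₁ ∧ S.Run q₁ s₂ q₁ ∧ S.Run q₁ s₃ q' ∧ S.out s₂ ≠ [] := by
  classical
  exact h.exists_cycle_of_card_lt_aux ∅ ⟨[], .nil q⟩ (by simp) (by simpa using hs)

end Runs

section Composition

variable {S₁ : LFSA Q1 E A} {S₂ : LFSA Q2 E A}

@[simp] lemma CC_lab (ev : Option E × Option E) : (S₁.CC S₂).lab ev = ev.1.bind S₁.lab := rfl

@[simp] lemma lproj_cons (ev : Option E × Option E) (s : List (Option E × Option E)) :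
    lproj (ev :: s) = ev.1.toList ++ lproj s := by
  rcases ev with ⟨_ | _, _⟩ <;> rfl

@[simp] lemma rproj_cons (ev : Option E × Option E) (s : List (Option E × Option E)) :
    rproj (ev :: s) = ev.2.toList ++ rproj s := by
  rcases ev with ⟨_, _ | _⟩ <;> rfl

lemma Run.CC_proj {p p' : Q1 × Q2} {s : List (Option E × Option E)}
    (h : (S₁.CC S₂).Run p s p') :
    S₁.Run p.1 (lproj s) p'.1 ∧ S₂.Run p.2 (rproj s) p'.2 ∧
      S₁.out (lproj s) = (S₁.CC S₂).out s ∧ S₂.out (rproj s) = (S₁.CC S₂).out s := by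
  induction h with
  | nil => exact ⟨.nil _, .nil _, rfl, rfl⟩
  | @cons p p₁ p' ev s hd _ ih =>
    obtain ⟨ih₁, ih₂, ih₃, ih₄⟩ := ih
    rcases ev with ⟨_ | e₁, _ | e₂⟩
    · exact hd.elim
    · obtain ⟨he, h₁, h₂⟩ := hd
      exact ⟨h₁ ▸ ih₁, .cons h₂ ih₂, by simp [ih₃], by simp [he, ih₄]⟩
    · obtain ⟨he, h₁, h₂⟩ := hd
      exact ⟨.cons h₁ ih₁, h₂ ▸ ih₂, by simp [he, ih₃], by simp [he, ih₄]⟩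
    · obtain ⟨⟨α, he₁, he₂⟩, h₁, h₂⟩ := hd
      exact ⟨.cons h₁ ih₁, .cons h₂ ih₂, by simp [he₁, ih₃], by simp [he₁, he₂, ih₄]⟩

@[simp] lemma CC_out_map_right (v : List E) :
    (S₁.CC S₂).out (v.map fun e => (none, some e)) = [] := by
  simp [out, Function.comp_def]

lemma Run.CC_of_out_eq_nil {b b' : Q2} {v : List E} (h : S₂.Run b v b') (hv : S₂.out v = [])
    (a : Q1) : (S₁.CC S₂).Run (a, b) (v.map fun e => (none, some e)) (a, b') := by
  induction h with
  | nil => exact .nil _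
  | @cons _ b₁ _ _ _ hd _ ih =>
    simp only [out_cons, List.append_eq_nil_iff, Option.toList_eq_nil_iff] at hv
    exact .cons (q' := (a, b₁)) ⟨hv.1, rfl, hd⟩ (ih hv.2)

lemma Run.exists_CC_run_of_out_eq {a a' : Q1} {u : List E} (hu : S₁.Run a u a') {b b' : Q2}
    {v : List E} (hv : S₂.Run b v b') (huv : S₁.out u = S₂.out v) :
    ∃ s, (S₁.CC S₂).Run (a, b) s (a', b') ∧ (S₁.CC S₂).out s = S₁.out u := by
  induction hu generalizing b v with
  | nil a => exact ⟨_, hv.CC_of_out_eq_nil huv.symm a, by simp⟩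
  | @cons a a₁ a' e u hd hr ih =>
    cases he : S₁.lab e with
    | none =>
      obtain ⟨s, hs, hso⟩ := ih hv (by simpa [he] using huv)
      exact ⟨(some e, none) :: s, .cons (q' := (a₁, b)) ⟨he, hd, rfl⟩ hs, by simpa [he] using hso⟩
    | some α =>
      rw [out_cons, he, Option.toList_some, List.singleton_append] at huv
      obtain ⟨w, e', v', rfl, hw₀, he', hv'⟩ := List.filterMap_eq_cons_iff.mp huv.symm
      obtain ⟨m, hw, hv⟩ := run_append_iff.mp hv
      cases hv with
      | cons hd' hv =>
        obtain ⟨s, hs, hso⟩ := ih hv hv'.symm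
        refine ⟨w.map (fun e => (none, some e)) ++ (some e, some e') :: s,
          (hw.CC_of_out_eq_nil (List.filterMap_eq_nil_iff.mpr hw₀) a).append
            (.cons (q' := (a₁, _)) ⟨⟨α, he, he'⟩, hd, hd'⟩ hs), ?_⟩
        simp [he, hso]

theorem M_CC_eq_prod (σ : List A) : (S₁.CC S₂).M σ = S₁.M σ ×ˢ S₂.M σ := by
  ext ⟨x, y⟩
  constructor
  · rintro ⟨q₀, hq₀, s, rfl, hs⟩
    obtain ⟨h₁, h₂, ho₁, ho₂⟩ := hs.CC_proj
    exact ⟨⟨q₀.1, hq₀.1, _, ho₁, h₁⟩, ⟨q₀.2, hq₀.2, _, ho₂, h₂⟩⟩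
  · rintro ⟨⟨a, ha, u, rfl, hu⟩, ⟨b, hb, v, hvu, hv⟩⟩
    obtain ⟨s, hs, hso⟩ := hu.exists_CC_run_of_out_eq hv hvu.symm
    exact ⟨(a, b), ⟨ha, hb⟩, s, hso, hs⟩

end Composition

theorem not_starSD_iff (S : LFSA Q E A) :
    ¬ S.StarSD ↔ ∀ k : ℕ, ∃ σ : List A, k < σ.length ∧ ∃ x ∈ S.M σ, ∃ y ∈ S.M σ, x ≠ y := by
  constructor
  · intro h k
    simp only [StarSD, not_exists, not_and, not_forall] at h
    obtain ⟨s, ⟨q₀, hq₀, _, hs⟩, σ, hσ, hlen, hM⟩ := h (k + 1) k.succ_pos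
    obtain ⟨s₀, x, hx, rfl⟩ := hs.exists_run_of_prefix_out hσ
    have hxM : x ∈ S.M (S.out s₀) := ⟨q₀, hq₀, s₀, rfl, hx⟩
    obtain ⟨y, hy, hyx⟩ : ∃ y ∈ S.M (S.out s₀), y ≠ x := by
      by_contra! hall
      exact hM x (Set.eq_singleton_iff_unique_mem.mpr ⟨hxM, hall⟩)
    exact ⟨_, by omega, x, hxM, y, hy, hyx.symm⟩
  · rintro h ⟨k, -, hk⟩
    obtain ⟨σ, hlen, x, hx, y, hy, hxy⟩ := h k
    obtain ⟨q₀, hq₀, s, rfl, hs⟩ := id hx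
    obtain ⟨q, hq⟩ := hk s ⟨q₀, hq₀, x, hs⟩ _ List.prefix_rfl hlen
    rw [hq] at hx hy
    exact hxy (hx.trans hy.symm)

end LFSA

/-- concurrent-composition characterization of non-*-strong detectability. -/
theorem stmt1 {Q E A : Type*} [Fintype Q] (S : LFSA Q E A) :
    ¬ S.StarSD ↔
      ∃ q0' ∈ (S.CC S).Q0, ∃ (q1' q2' : Q × Q)
        (s1' s2' s3' : List (Option E × Option E)),
        (S.CC S).Run q0' s1' q1' ∧ (S.CC S).Run q1' s2' q1' ∧ (S.CC S).Run q1' s3' q2' ∧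
        (S.CC S).out s2' ≠ [] ∧ q2'.1 ≠ q2'.2 := by
  rw [LFSA.not_starSD_iff]
  constructor
  · intro h
    obtain ⟨σ, hlen, x, hx, y, hy, hxy⟩ := h (Fintype.card (Q × Q))
    obtain ⟨q₀, hq₀, s, rfl, hs⟩ : (x, y) ∈ (S.CC S).M σ := by
      rw [LFSA.M_CC_eq_prod]
      exact ⟨hx, hy⟩
    obtain ⟨q₁, s₁, s₂, s₃, h₁, h₂, h₃, hne⟩ := hs.exists_cycle_of_card_lt hlen
    exact ⟨q₀, hq₀, q₁, (x, y), s₁, s₂, s₃, h₁, h₂, h₃, hne, hxy⟩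
  · rintro ⟨q₀, hq₀, q₁, q₂, s₁, s₂, s₃, h₁, h₂, h₃, hne, hq₂⟩ k
    obtain ⟨t, ht, hlen⟩ := h₂.exists_long_cycle hne (k + 1)
    have hq₂M : q₂ ∈ (S.CC S).M _ := ⟨q₀, hq₀, _, rfl, h₁.append (ht.append h₃)⟩
    rw [LFSA.M_CC_eq_prod] at hq₂M
    exact ⟨_, by simp only [LFSA.out_append, List.length_append]; omega,
      q₂.1, hq₂M.1, q₂.2, hq₂M.2, hq₂⟩
end

section
/- An LFSA S with faulty event set E_f is not E_f-diagnosable if and only if in the concurrent composition CC(S_f, S_n) of the faulty and normal subautomata there exists a run q0' →s1' q1' →e' q2' →s2' q3' →s3' q3' such that q0' is initial, the left component of the event e' is a faulty event, and the left component of s3' has positive length. -/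
/-!
If `S` is not diagnosable, a faulty word followed by a continuation longer than `|Q × Q|`, together
with a fault-free word of the same output, lifts to runs of `S_f` and `S_n` that interleave into a
run of `CC(S_f, S_n)`. After the fault this run makes more than `|Q × Q|` left moves, so some state
is revisited with a left move in between: that is the cycle. Conversely, pumping the cycle yields
faulty words with arbitrarily long continuations whose output is reproduced by the fault-free
right projection.
-/

namespace LFSA

variable {Q Q1 Q2 E A B : Type*}

section Runs

variable {S : LFSA Q E A}

theorem Run.append_s5 {q p q' : Q} {u v : List E} (hu : S.Run q u p) (hv : S.Run p v q') :
    S.Run q (u ++ v) q' := by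
  induction hu with
  | nil => exact hv
  | cons hδ _ ih => exact .cons hδ (ih hv)

theorem Run.exists_of_append {q q' : Q} {u v : List E} (h : S.Run q (u ++ v) q') :
    ∃ p, S.Run q u p ∧ S.Run p v q' := by
  induction u generalizing q with
  | nil => exact ⟨q, .nil q, h⟩
  | cons e u ih =>
    obtain _ | ⟨hδ, hr⟩ := h
    obtain ⟨p, hu, hv⟩ := ih hr
    exact ⟨p, .cons hδ hu, hv⟩

theorem Run.mono {T : LFSA Q E A} (hST : ∀ q e q', S.δ q e q' → T.δ q e q') {q q' : Q}
    {s : List E} (h : S.Run q s q') : T.Run q s q' := by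
  induction h with
  | nil => exact .nil _
  | cons hδ _ ih => exact .cons (hST _ _ _ hδ) ih

theorem Run.flatten_replicate {p : Q} {v : List E} (h : S.Run p v p) (n : ℕ) :
    S.Run p (List.replicate n v).flatten p := by
  induction n with
  | zero => exact .nil p
  | succ n ih => exact h.append_s5 ih

/-- Pigeonhole invariant: every state of `V` reaches the current state `q` by a run with a counted
event. Meeting a state of `V` again closes the cycle; otherwise each counted event adds a new state
to `V`, which cannot happen more than `Fintype.card Q` times. -/
theorem Run.exists_cycle_of_card_lt_aux_s5 [Fintype Q] (f : E → Option B) {q₀ q q' : Q}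
    {w : List E} (h : S.Run q w q') (V : Finset Q)
    (hV : ∀ p ∈ V, ∃ u v, S.Run q₀ u p ∧ S.Run p v q ∧ v.filterMap f ≠ [])
    (hq : ∃ u, S.Run q₀ u q) (hw : Fintype.card Q < V.card + (w.filterMap f).length) :
    ∃ p u v, S.Run q₀ u p ∧ S.Run p v p ∧ v.filterMap f ≠ [] := by
  classical
  induction h generalizing V with
  | nil q => exact absurd hw (by simpa using V.card_le_univ)
  | @cons q q₁ _ e s hδ _ ih =>
    have hstep : S.Run q [e] q₁ := .cons hδ (.nil q₁)
    obtain ⟨u, hu⟩ := hq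
    have hextend : ∀ p ∈ V, ∃ u v, S.Run q₀ u p ∧ S.Run p v q₁ ∧ v.filterMap f ≠ [] := by
      intro p hp
      obtain ⟨u', v, hu', hv, hvf⟩ := hV p hp
      exact ⟨u', v ++ [e], hu', hv.append_s5 hstep, by simp [List.filterMap_append, hvf]⟩
    cases hfe : f e with
    | none =>
      refine ih V hextend ⟨u ++ [e], hu.append_s5 hstep⟩ ?_
      simpa [List.filterMap_cons, hfe] using hw
    | some b =>
      by_cases hqV : q ∈ V
      · obtain ⟨u', v, hu', hv, hvf⟩ := hV q hqV
        exact ⟨q, u', v, hu', hv, hvf⟩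
      refine ih (insert q V) ?_ ⟨u ++ [e], hu.append_s5 hstep⟩ ?_
      · intro p hp
        rcases Finset.mem_insert.mp hp with rfl | hp
        · exact ⟨u, [e], hu, hstep, by simp [hfe]⟩
        · exact hextend p hp
      · rw [Finset.card_insert_of_notMem hqV]
        simpa [List.filterMap_cons, hfe, Nat.add_assoc, Nat.add_comm 1] using hw

theorem Run.exists_cycle_of_card_lt_s5 [Fintype Q] (f : E → Option B) {q q' : Q} {w : List E}
    (h : S.Run q w q') (hw : Fintype.card Q < (w.filterMap f).length) :
    ∃ p u v, S.Run q u p ∧ S.Run p v p ∧ v.filterMap f ≠ [] :=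
  h.exists_cycle_of_card_lt_aux_s5 f ∅ (by simp) ⟨[], .nil q⟩ (by simpa using hw)

end Runs

section FaultySubautomata

variable {S : LFSA Q E A} {Ef : Set E}

theorem run_sn_iff {q q' : Q} {s : List E} :
    (S.Sn Ef).Run q s q' ↔ S.Run q s q' ∧ ∀ e ∈ s, e ∉ Ef := by
  constructor
  · intro h
    induction h with
    | nil => simp [Run.nil]
    | cons hδ _ ih => exact ⟨.cons hδ.1 ih.1, by simpa [hδ.2] using ih.2⟩
  · rintro ⟨h, hs⟩
    induction h with
    | nil => exact .nil _
    | cons hδ _ ih =>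
      simp only [List.mem_cons, forall_eq_or_imp] at hs
      exact .cons ⟨hδ, hs.1⟩ (ih hs.2)

theorem Run.of_sf {q q' : Q} {s : List E} (h : (S.Sf Ef).Run q s q') : S.Run q s q' :=
  h.mono fun _ _ _ (hδ : (S.Sf Ef).δ _ _ _) => hδ.1

theorem Run.of_sn {q q' : Q} {s : List E} (h : (S.Sn Ef).Run q s q') : S.Run q s q' :=
  (run_sn_iff.mp h).1

theorem Run.eq_or_reachPlus {q q' : Q} {s : List E} (h : S.Run q s q') :
    q = q' ∨ S.ReachPlus q q' := by
  cases s with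
  | nil => cases h; exact .inl rfl
  | cons e s => exact .inr ⟨e :: s, List.cons_ne_nil e s, h⟩

theorem Run.sf_of_reaches_fault {c d : Q} {f : E} (hf : f ∈ Ef) (hcd : S.δ c f d) {q : Q}
    {t : List E} (h : S.Run q t c) : (S.Sf Ef).Run q t c := by
  induction t generalizing q with
  | nil => cases h; exact .nil _
  | cons e t ih =>
    obtain _ | ⟨hδ, hr⟩ := h
    exact .cons ⟨hδ, c, f, d, hf, hcd, .inr (.inl (hr.eq_or_reachPlus.imp_left Eq.symm))⟩
      (ih hr)

theorem Run.sf_of_reached_from_fault {c d : Q} {f : E} (hf : f ∈ Ef) (hcd : S.δ c f d)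
    {p q' : Q} {s u : List E} (hu : S.Run d u p) (h : S.Run p s q') : (S.Sf Ef).Run p s q' := by
  induction h generalizing u with
  | nil => exact .nil _
  | @cons p p₁ _ e _ hδ _ ih =>
    exact .cons ⟨hδ, c, f, d, hf, hcd, .inr (.inr (hu.eq_or_reachPlus.imp_left Eq.symm))⟩
      (ih (hu.append_s5 (.cons hδ (.nil p₁))))

theorem run_sf_of_fault {q c d q' : Q} {t s : List E} {f : E} (hf : f ∈ Ef)
    (ht : S.Run q t c) (hcd : S.δ c f d) (hs : S.Run d s q') :
    (S.Sf Ef).Run q (t ++ f :: s) q' :=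
  (ht.sf_of_reaches_fault hf hcd).append_s5
    (.cons ⟨hcd, c, f, d, hf, hcd, .inl ⟨rfl, rfl, rfl⟩⟩
      (Run.sf_of_reached_from_fault hf hcd (.nil d) hs))

end FaultySubautomata

section ConcurrentComposition

variable {S1 : LFSA Q1 E A} {S2 : LFSA Q2 E A}

theorem lproj_append (w1 w2 : List (Option E × Option E)) :
    lproj (w1 ++ w2) = lproj w1 ++ lproj w2 :=
  List.filterMap_append

theorem length_lproj_flatten_replicate (n : ℕ) (v : List (Option E × Option E)) :
    (lproj (List.replicate n v).flatten).length = n * (lproj v).length := by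
  simp [lproj]

theorem Run.cc_proj {p p' : Q1 × Q2} {w : List (Option E × Option E)}
    (h : (S1.CC S2).Run p w p') :
    S1.Run p.1 (lproj w) p'.1 ∧ S2.Run p.2 (rproj w) p'.2 ∧
      S1.out (lproj w) = S2.out (rproj w) := by
  induction h with
  | nil => exact ⟨.nil _, .nil _, rfl⟩
  | @cons p p₁ p' ev w hδ _ ih =>
    obtain ⟨ih1, ih2, ih3⟩ := ih
    rcases ev with ⟨_ | e1, _ | e2⟩
    · exact hδ.elim
    · obtain ⟨hl, h1, hδ2⟩ := hδ
      exact ⟨by rw [h1]; exact ih1, .cons hδ2 ih2, by simpa [out, lproj, rproj, hl] using ih3⟩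
    · obtain ⟨hl, hδ1, h2⟩ := hδ
      exact ⟨.cons hδ1 ih1, by rw [h2]; exact ih2, by simpa [out, lproj, rproj, hl] using ih3⟩
    · obtain ⟨⟨a, ha1, ha2⟩, hδ1, hδ2⟩ := hδ
      exact ⟨.cons hδ1 ih1, .cons hδ2 ih2, by simpa [out, lproj, rproj, ha1, ha2] using ih3⟩

theorem exists_cc_run_of_out_eq {p1 p1' : Q1} {p2 p2' : Q2} {s1 s2 : List E}
    (h1 : S1.Run p1 s1 p1') (h2 : S2.Run p2 s2 p2') (hout : S1.out s1 = S2.out s2) :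
    ∃ w, lproj w = s1 ∧ rproj w = s2 ∧ (S1.CC S2).Run (p1, p2) w (p1', p2') := by
  induction h1 generalizing p2 s2 with
  | nil p1 =>
    induction h2 with
    | nil => exact ⟨[], rfl, rfl, .nil _⟩
    | @cons p2 r _ e2 s2 hδ _ ih =>
      have hl : S2.lab e2 = none := by cases h : S2.lab e2 <;> simp_all [out]
      obtain ⟨w, hw1, rfl, hw⟩ := ih (by simpa [out, hl] using hout)
      exact ⟨(none, some e2) :: w, hw1, rfl, .cons (q' := (p1, r)) ⟨hl, rfl, hδ⟩ hw⟩
  | @cons p1 r _ e1 s1 hδ1 _ ih1 =>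
    cases hl1 : S1.lab e1 with
    | none =>
      obtain ⟨w, rfl, rfl, hw⟩ := ih1 h2 (by simpa [out, hl1] using hout)
      exact ⟨(some e1, none) :: w, rfl, rfl, .cons (q' := (r, p2)) ⟨hl1, hδ1, rfl⟩ hw⟩
    | some a =>
      induction h2 with
      | nil => simp [out, hl1] at hout
      | @cons p2 r2 _ e2 s2 hδ2 hr2 ih2 =>
        cases hl2 : S2.lab e2 with
        | none =>
          obtain ⟨w, hw1, rfl, hw⟩ := ih2 ih1 (by simpa [out, hl2] using hout)
          exact ⟨(none, some e2) :: w, hw1, rfl, .cons (q' := (p1, r2)) ⟨hl2, rfl, hδ2⟩ hw⟩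
        | some b =>
          simp only [out, List.filterMap_cons, hl1, hl2, List.cons.injEq] at hout
          obtain ⟨rfl, hout⟩ := hout
          obtain ⟨w, rfl, rfl, hw⟩ := ih1 hr2 hout
          exact ⟨(some e1, some e2) :: w, rfl, rfl, .cons ⟨⟨a, hl1, hl2⟩, hδ1, hδ2⟩ hw⟩

end ConcurrentComposition

section Diagnosability

variable {S : LFSA Q E A} {Ef : Set E}

theorem exists_long_cc_run_after_fault_of_not_diag (h : ¬ S.Diag Ef) (k : ℕ) :
    ∃ q0 ∈ ((S.Sf Ef).CC (S.Sn Ef)).Q0,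
      ∃ (q1 q2 q3 : Q × Q) (w1 w2 : List (Option E × Option E)) (e : Option E × Option E),
        ((S.Sf Ef).CC (S.Sn Ef)).Run q0 w1 q1 ∧ ((S.Sf Ef).CC (S.Sn Ef)).δ q1 e q2 ∧
        ((S.Sf Ef).CC (S.Sn Ef)).Run q2 w2 q3 ∧ (∃ f ∈ Ef, e.1 = some f) ∧
        k < (lproj w2).length := by
  unfold Diag at h
  push Not at h
  obtain ⟨s, -, ⟨t, f, hf, rfl⟩, s', ⟨q0, hq0, qe, hrun⟩, hlen, s'', ⟨r0, hr0, re, hrun''⟩,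
    hout, hnf⟩ := h k
  obtain ⟨c, ht, _ | ⟨hcd, hs'⟩⟩ := Run.exists_of_append (by simpa using hrun)
  obtain ⟨w, hwl, -, hw⟩ := exists_cc_run_of_out_eq (run_sf_of_fault hf ht hcd hs')
    (run_sn_iff.mpr ⟨hrun'', fun e he hef => hnf e hef he⟩)
    (by simpa using hout.symm : S.out (t ++ f :: s') = S.out s'')
  obtain ⟨w1, l2, rfl, -, hl2⟩ := List.filterMap_eq_append_iff.mp hwl
  obtain ⟨w1', e, w2, rfl, -, he, rfl⟩ := List.filterMap_eq_cons_iff.mp hl2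
  obtain ⟨q1, hw1, _ | ⟨hδ, hw2⟩⟩ :=
    Run.exists_of_append (u := w1 ++ w1') (by rwa [List.append_assoc])
  exact ⟨(q0, r0), ⟨hq0, hr0⟩, q1, _, _, _, w2, e, hw1, hδ, hw2, ⟨f, hf, he⟩, hlen⟩

theorem not_diag_of_long_cc_runs_after_fault
    (h : ∀ k : ℕ, ∃ q0 ∈ ((S.Sf Ef).CC (S.Sn Ef)).Q0,
      ∃ (q1 q2 q3 : Q × Q) (w1 w2 : List (Option E × Option E)) (e : Option E × Option E),
        ((S.Sf Ef).CC (S.Sn Ef)).Run q0 w1 q1 ∧ ((S.Sf Ef).CC (S.Sn Ef)).δ q1 e q2 ∧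
        ((S.Sf Ef).CC (S.Sn Ef)).Run q2 w2 q3 ∧ (∃ f ∈ Ef, e.1 = some f) ∧
        k < (lproj w2).length) :
    ¬ S.Diag Ef := by
  rintro ⟨k, hk⟩
  obtain ⟨q0, ⟨hq01, hq02⟩, q1, q2, q3, w1, w2, e, hw1, hδ, hw2, ⟨f, hf, he⟩, hlen⟩ := h k
  have hw1e : ((S.Sf Ef).CC (S.Sn Ef)).Run q0 (w1 ++ [e]) q2 := hw1.append_s5 (.cons hδ (.nil q2))
  have hfaulty : lproj (w1 ++ [e]) = lproj w1 ++ [f] := by simp [lproj, he]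
  obtain ⟨hL1, -, -⟩ := hw1e.cc_proj
  obtain ⟨hL, hR, hout⟩ := (hw1e.append_s5 hw2).cc_proj
  obtain ⟨hR, hnf⟩ := run_sn_iff.mp hR
  obtain ⟨e', hfe', hmem⟩ := hk _ ⟨q0.1, hq01, q2.1, hL1.of_sf⟩ ⟨lproj w1, f, hf, hfaulty⟩
    (lproj w2) ⟨q0.1, hq01, q3.1, by rw [← lproj_append]; exact hL.of_sf⟩ hlen
    _ ⟨q0.2, hq02, q3.2, hR⟩ (by rw [← lproj_append]; exact hout.symm)
  exact hnf e' hmem hfe'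

end Diagnosability

end LFSA

open LFSA

/-- concurrent-composition characterization of non-diagnosability. -/
theorem stmt5 {Q E A : Type*} [Fintype Q] (S : LFSA Q E A) (Ef : Set E) :
    ¬ S.Diag Ef ↔
      ∃ q0' ∈ ((S.Sf Ef).CC (S.Sn Ef)).Q0,
        ∃ (q1' q2' q3' : Q × Q) (s1' s2' s3' : List (Option E × Option E))
          (e' : Option E × Option E),
          ((S.Sf Ef).CC (S.Sn Ef)).Run q0' s1' q1' ∧
          ((S.Sf Ef).CC (S.Sn Ef)).δ q1' e' q2' ∧
          ((S.Sf Ef).CC (S.Sn Ef)).Run q2' s2' q3' ∧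
          ((S.Sf Ef).CC (S.Sn Ef)).Run q3' s3' q3' ∧
          (∃ f ∈ Ef, e'.1 = some f) ∧ LFSA.lproj s3' ≠ [] := by
  constructor
  · intro h
    obtain ⟨q0, hq0, q1, q2, q3, w1, w2, e, hw1, hδ, hw2, hfault, hlen⟩ :=
      exists_long_cc_run_after_fault_of_not_diag h (Fintype.card (Q × Q))
    obtain ⟨p, u, v, hu, hv, hvne⟩ := hw2.exists_cycle_of_card_lt_s5 Prod.fst hlen
    exact ⟨q0, hq0, q1, q2, p, w1, u, v, e, hw1, hδ, hu, hv, hfault, hvne⟩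
  · rintro ⟨q0, hq0, q1, q2, q3, w1, w2, v, e, hw1, hδ, hw2, hv, hfault, hvne⟩
    refine not_diag_of_long_cc_runs_after_fault fun k =>
      ⟨q0, hq0, q1, q2, q3, w1, w2 ++ (List.replicate (k + 1) v).flatten, e, hw1, hδ,
        hw2.append_s5 (hv.flatten_replicate (k + 1)), hfault, ?_⟩
    rw [lproj_append, List.length_append, length_lproj_flatten_replicate]
    nlinarith [List.length_pos_iff.mpr hvne]
end
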